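/- arXiv:1409.2823 — 2 statements merged into one kernel-verified Lean document; each statement's English description precedes it below -/
import Mathlib

section
/- Let $X$ be a set with two binary operations $(a,b) \mapsto a^b$ and $(a,b) \mapsto a_b$ satisfying the three birack Yang–Baxter identities $a^{bc_b} = a^{cb^c}$, $c_{ba^b} = c_{ab_a}$, and $(b_a)^{c_a} = (b^c)_{a^c}$ for all $a,b,c$ (here $a^{bc_b}$ means $(a^b)^{c_b}$, etc.). For $n \geq 1$ let $C_n$ be the free abelian group on words $a_1 \cdots a_n$ of length $n$ in $X$, and define $\partial : C_n \to C_{n-1}$ by $\partial = \sum_{i=1}^{n}(-1)^i(\partial_i^- - \partial_i^+)$, where $\partial_i^-(a_1\cdots a_n) = a_1 \cdots a_{i-1} a_{i+1} \cdots a_n$ and $\partial_i^+(a_1 \cdots a_n) = (a_1)^{a_i}\cdots(a_{i-1})^{a_i}(a_{i+1})_{a_i}\cdots(a_n)_{a_i}$. Then $\partial \circ \partial = 0$, so $(C_*, \partial)$ is a chain complex. -/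
/-- Face `∂_i^-`: delete the `i`-th letter of the word. -/
def faceMinus {X : Type*} {n : ℕ} (w : Fin (n + 1) → X) (i : Fin (n + 1)) :
    Fin n → X := fun k => w (i.succAbove k)

/-- Face `∂_i^+`: delete the `i`-th letter, acting by `(·)^{a_i}` on the letters
before position `i` and by `(·)_{a_i}` on the letters after position `i`. -/
def facePlus {X : Type*} (up dn : X → X → X) {n : ℕ} (w : Fin (n + 1) → X)
    (i : Fin (n + 1)) : Fin n → X :=
  fun k => if i.succAbove k < i then up (w (i.succAbove k)) (w i)
           else dn (w (i.succAbove k)) (w i)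

/-- The birack boundary map `∂ = ∑ᵢ (-1)ⁱ (∂_i^- - ∂_i^+)` on the free abelian group
on `n`-cubes (words of length `n` in `X`). -/
noncomputable def birackBoundary {X : Type*} (up dn : X → X → X) (n : ℕ) :
    FreeAbelianGroup (Fin (n + 1) → X) →+ FreeAbelianGroup (Fin n → X) :=
  FreeAbelianGroup.lift fun w =>
    ∑ i : Fin (n + 1), ((-1 : ℤ) ^ ((i : ℕ) + 1)) •
      (FreeAbelianGroup.of (faceMinus w i) - FreeAbelianGroup.of (facePlus up dn w i))

/-! The faces `d_i = ∂_i^- - ∂_i^+` satisfy the semi-simplicial identities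
`d_i ∘ d_{j+1} = d_j ∘ d_i` for `i ≤ j`, and `∂ = -∑ (-1)^i d_i`, so `∂ ∘ ∂ = 0` follows by the
usual cancellation in the alternating double sum. For the three compositions involving a
`∂^-` the identity is pure index bookkeeping; for `∂^+ ∘ ∂^+` it is letter by letter one of
the three Yang–Baxter identities. -/

open Finset

theorem Fin.val_succAbove {n : ℕ} (p : Fin (n + 1)) (k : Fin n) :
    (p.succAbove k : ℕ) = if (k : ℕ) < p then (k : ℕ) else k + 1 := by
  unfold Fin.succAbove
  split_ifs <;> simp_all [Fin.lt_def]

theorem Fin.succ_succAbove_succAbove_of_le {n : ℕ} {i j : Fin (n + 1)} (h : i ≤ j) (k : Fin n) :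
    j.succ.succAbove (i.succAbove k) = i.castSucc.succAbove (j.succAbove k) := by
  rw [Fin.le_def] at h
  ext
  simp only [Fin.val_succAbove, Fin.val_succ, Fin.val_castSucc]
  split_ifs <;> omega

theorem alternating_sum_comp_alternating_sum_eq_zero {M : ℕ → Type*} [∀ n, AddCommGroup (M n)]
    (d : ∀ n, Fin (n + 1) → M (n + 1) →+ M n)
    (hd : ∀ n (i j : Fin (n + 1)), i ≤ j →
      (d n i).comp (d (n + 1) j.succ) = (d n j).comp (d (n + 1) i.castSucc))
    (n : ℕ) :
    (∑ i : Fin (n + 1), (-1 : ℤ) ^ (i : ℕ) • d n i).comp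
      (∑ j : Fin (n + 2), (-1 : ℤ) ^ (j : ℕ) • d (n + 1) j) = 0 := by
  ext x
  simp only [AddMonoidHom.comp_apply, AddMonoidHom.finsetSum_apply, AddMonoidHom.smul_apply,
    map_sum, map_zsmul, smul_sum, smul_smul, ← sum_product', univ_product_univ,
    AddMonoidHom.zero_apply]
  let S : Finset (Fin (n + 2) × Fin (n + 1)) := {p | (p.1 : ℕ) ≤ p.2}
  have mem_S {p} : p ∈ S ↔ (p.1 : ℕ) ≤ p.2 := by simp [S]
  have mem_compl_S {p} : p ∈ Sᶜ ↔ (p.2 : ℕ) < p.1 := by simp [S]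
  -- the term of `(j, i)` with `j ≤ i` cancels the term of `(i + 1, j)`
  rw [← sum_add_sum_compl S, ← eq_neg_iff_add_eq_zero, ← sum_neg_distrib]
  refine sum_bij' (fun p hp => (p.2.succ, p.1.castLT ?_)) (fun p hp => (p.2.castSucc, p.1.pred ?_))
    ?_ ?_ ?_ ?_ ?_
  · have := mem_S.1 hp
    omega
  · intro h
    simpa [h] using mem_compl_S.1 hp
  · intro p hp
    rw [mem_compl_S, Fin.val_castLT, Fin.val_succ]
    exact Nat.lt_succ_of_le (mem_S.1 hp)
  · intro p hp
    rw [mem_S, Fin.val_castSucc, Fin.val_pred]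
    have := mem_compl_S.1 hp
    omega
  · intro p _
    simp
  · intro p _
    simp
  · rintro ⟨j, i⟩ hp
    have hji : (j : ℕ) ≤ i := mem_S.1 hp
    have hface : d n (j.castLT (by omega)) (d (n + 1) i.succ x) = d n i (d (n + 1) j x) := by
      have h := DFunLike.congr_fun (hd n (j.castLT (by omega)) i hji) x
      rwa [AddMonoidHom.comp_apply, AddMonoidHom.comp_apply, Fin.castSucc_castLT] at h
    simp only [Fin.val_succ, Fin.val_castLT, hface, pow_succ, ← neg_smul]
    congr 1
    ring

section Faces

variable {X : Type*} {up dn : X → X → X} {n : ℕ} {i j : Fin (n + 1)}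

theorem faceMinus_faceMinus_of_le (h : i ≤ j) (w : Fin (n + 2) → X) :
    faceMinus (faceMinus w j.succ) i = faceMinus (faceMinus w i.castSucc) j := by
  funext k
  simp only [faceMinus, Fin.succ_succAbove_succAbove_of_le h]

theorem facePlus_faceMinus_of_le (h : i ≤ j) (w : Fin (n + 2) → X) :
    facePlus up dn (faceMinus w j.succ) i = faceMinus (facePlus up dn w i.castSucc) j := by
  funext k
  rw [Fin.le_def] at h
  simp only [faceMinus, facePlus, Fin.succ_succAbove_succAbove_of_le h,
    Fin.succAbove_succ_of_le _ _ h]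
  simp only [Fin.lt_def, Fin.val_succAbove, Fin.val_castSucc]
  split_ifs <;> first | rfl | omega

theorem faceMinus_facePlus_of_le (h : i ≤ j) (w : Fin (n + 2) → X) :
    faceMinus (facePlus up dn w j.succ) i = facePlus up dn (faceMinus w i.castSucc) j := by
  funext k
  rw [Fin.le_def] at h
  simp only [faceMinus, facePlus, Fin.succ_succAbove_succAbove_of_le h,
    Fin.succAbove_castSucc_of_le _ _ h]
  simp only [Fin.lt_def, Fin.val_succAbove, Fin.val_succ, Fin.val_castSucc]
  split_ifs <;> first | rfl | omega

theorem facePlus_facePlus_of_le (hYB1 : ∀ a b c : X, up (up a b) (dn c b) = up (up a c) (up b c))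
    (hYB2 : ∀ a b c : X, dn (dn c b) (up a b) = dn (dn c a) (dn b a))
    (hYB3 : ∀ a b c : X, up (dn b a) (dn c a) = dn (up b c) (up a c))
    (h : i ≤ j) (w : Fin (n + 2) → X) :
    facePlus up dn (facePlus up dn w j.succ) i
      = facePlus up dn (facePlus up dn w i.castSucc) j := by
  funext k
  rw [Fin.le_def] at h
  simp only [facePlus, Fin.succ_succAbove_succAbove_of_le h,
    Fin.succAbove_castSucc_of_le _ _ h, Fin.succAbove_succ_of_le _ _ h]
  simp only [Fin.lt_def, Fin.val_succAbove, Fin.val_succ, Fin.val_castSucc]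
  -- letters before `i`, between `i` and `j`, and after `j` need `hYB1`, `hYB3` and `hYB2`
  split_ifs <;>
    first | omega | exact (hYB1 _ _ _).symm | exact (hYB3 _ _ _).symm | exact hYB2 _ _ _

end Faces

noncomputable def birackFace {X : Type*} (up dn : X → X → X) (n : ℕ) (i : Fin (n + 1)) :
    FreeAbelianGroup (Fin (n + 1) → X) →+ FreeAbelianGroup (Fin n → X) :=
  FreeAbelianGroup.lift fun w =>
    FreeAbelianGroup.of (faceMinus w i) - FreeAbelianGroup.of (facePlus up dn w i)

theorem birackBoundary_eq_neg_sum {X : Type*} (up dn : X → X → X) (n : ℕ) :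
    birackBoundary up dn n = -∑ i : Fin (n + 1), (-1 : ℤ) ^ (i : ℕ) • birackFace up dn n i := by
  ext w
  simp [birackBoundary, birackFace, pow_succ]

theorem birackFace_comp_birackFace_of_le {X : Type*} {up dn : X → X → X}
    (hYB1 : ∀ a b c : X, up (up a b) (dn c b) = up (up a c) (up b c))
    (hYB2 : ∀ a b c : X, dn (dn c b) (up a b) = dn (dn c a) (dn b a))
    (hYB3 : ∀ a b c : X, up (dn b a) (dn c a) = dn (up b c) (up a c))
    {n : ℕ} {i j : Fin (n + 1)} (h : i ≤ j) :
    (birackFace up dn n i).comp (birackFace up dn (n + 1) j.succ)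
      = (birackFace up dn n j).comp (birackFace up dn (n + 1) i.castSucc) := by
  ext w
  simp only [birackFace, AddMonoidHom.comp_apply, FreeAbelianGroup.lift_apply_of, map_sub,
    faceMinus_faceMinus_of_le h, facePlus_faceMinus_of_le h, faceMinus_facePlus_of_le h,
    facePlus_facePlus_of_le hYB1 hYB2 hYB3 h]
  abel

/-- If the operations satisfy the three birack Yang–Baxter identities, then
`∂ ∘ ∂ = 0`, so the cubes form a chain complex. -/
theorem birack_boundary_squared_zero {X : Type*} (up dn : X → X → X)
    (hYB1 : ∀ a b c : X, up (up a b) (dn c b) = up (up a c) (up b c))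
    (hYB2 : ∀ a b c : X, dn (dn c b) (up a b) = dn (dn c a) (dn b a))
    (hYB3 : ∀ a b c : X, up (dn b a) (dn c a) = dn (up b c) (up a c)) :
    ∀ n : ℕ,
      (birackBoundary up dn n).comp (birackBoundary up dn (n + 1)) = 0 := by
  intro n
  rw [birackBoundary_eq_neg_sum, birackBoundary_eq_neg_sum, AddMonoidHom.neg_comp,
    AddMonoidHom.comp_neg, neg_neg]
  exact alternating_sum_comp_alternating_sum_eq_zero (M := fun n => FreeAbelianGroup (Fin n → X))
    (birackFace up dn) (fun _ _ _ h => birackFace_comp_birackFace_of_le hYB1 hYB2 hYB3 h) n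
end

section
/- Let $X$ be a birack (operations $a^b$, $a_b$ satisfying the Yang–Baxter identities) that is moreover a biquandle, i.e. $a^a = a_a$ for all $a \in X$. In the birack chain complex $(C_*, \partial)$, let $D_n \subseteq C_n$ be the subgroup generated by degenerate cubes, i.e. words $a_1 \cdots a_n$ with $a_i = a_{i+1}$ for some $1 \leq i \leq n-1$. Then $\partial(D_n) \subseteq D_{n-1}$, so the degenerate cubes form a subcomplex. -/
/-- A word is degenerate if two consecutive letters coincide. -/
def IsDegenerate {X : Type*} {n : ℕ} (w : Fin n → X) : Prop :=
  ∃ k : Fin n, ∃ h : (k : ℕ) + 1 < n, w k = w ⟨(k : ℕ) + 1, h⟩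

/-- The subgroup of chains generated by degenerate cubes. -/
def degenSubgroup (X : Type*) (n : ℕ) : AddSubgroup (FreeAbelianGroup (Fin n → X)) :=
  AddSubgroup.closure {x | ∃ w : Fin n → X, IsDegenerate w ∧ x = FreeAbelianGroup.of w}

/-! If `a_k = a_{k+1}`, every face `∂ᵢ^±` with `i ∉ {k, k+1}` still contains the repeated pair,
while deleting `a_k` or `a_{k+1}` gives the same word (for `∂^+` this uses `a^a = a_a`), and
these two faces carry opposite signs in `∂`. -/

namespace Fin

lemma val_succAbove_s6 {n : ℕ} (i : Fin (n + 1)) (j : Fin n) :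
    (i.succAbove j : ℕ) = if (j : ℕ) < i then (j : ℕ) else (j : ℕ) + 1 := by
  unfold succAbove
  split_ifs <;> simp_all [lt_def]

lemma succAbove_eq_or_of_val_eq_succ {n : ℕ} {a b : Fin (n + 1)} (hab : (b : ℕ) = a + 1)
    (j : Fin n) :
    a.succAbove j = b.succAbove j ∨ (a.succAbove j = b ∧ b.succAbove j = a) := by
  simp only [Fin.ext_iff, val_succAbove_s6]
  split_ifs <;> omega

lemma exists_succAbove_eq_of_val_eq_succ {n : ℕ} {i a b : Fin (n + 1)}
    (hab : (b : ℕ) = a + 1) (hia : i ≠ a) (hib : i ≠ b) :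
    ∃ p q : Fin n, (q : ℕ) = p + 1 ∧ i.succAbove p = a ∧ i.succAbove q = b := by
  obtain ⟨p, hp⟩ := exists_succAbove_eq hia.symm
  obtain ⟨q, hq⟩ := exists_succAbove_eq hib.symm
  refine ⟨p, q, ?_, hp, hq⟩
  rw [Fin.ext_iff, val_succAbove_s6] at hp hq
  rw [Fin.ne_iff_vne] at hia hib
  split_ifs at hp hq <;> omega

end Fin

section

variable {X : Type*}

lemma isDegenerate_of_val_eq_succ {n : ℕ} {v : Fin n → X} {p q : Fin n}
    (hpq : (q : ℕ) = p + 1) (h : v p = v q) : IsDegenerate v :=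
  ⟨p, hpq ▸ q.isLt, by rwa [show q = ⟨p + 1, hpq ▸ q.isLt⟩ from Fin.ext hpq] at h⟩

lemma of_mem_degenSubgroup {n : ℕ} {v : Fin n → X} (h : IsDegenerate v) :
    FreeAbelianGroup.of v ∈ degenSubgroup X n :=
  AddSubgroup.subset_closure ⟨v, h, rfl⟩

variable {n : ℕ} {w : Fin (n + 1) → X} {a b : Fin (n + 1)}

lemma faceMinus_eq_of_val_eq_succ (hab : (b : ℕ) = a + 1) (h : w a = w b) :
    faceMinus w a = faceMinus w b := by
  funext j
  rcases Fin.succAbove_eq_or_of_val_eq_succ hab j with heq | ⟨ha, hb⟩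
  · simp only [faceMinus, heq]
  · simp only [faceMinus, ha, hb, h]

lemma facePlus_eq_of_val_eq_succ (up dn : X → X → X) (hBQ : ∀ x : X, up x x = dn x x)
    (hab : (b : ℕ) = a + 1) (h : w a = w b) :
    facePlus up dn w a = facePlus up dn w b := by
  funext j
  rcases Fin.succAbove_eq_or_of_val_eq_succ hab j with heq | ⟨ha, hb⟩
  · have hside : a.succAbove j < a ↔ b.succAbove j < b := by
      have hne := a.succAbove_ne j
      have hne' := b.succAbove_ne j
      rw [heq] at hne ⊢
      rw [Fin.ne_iff_vne] at hne hne'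
      simp only [Fin.lt_def]
      omega
    simp only [facePlus, hside]
    rw [heq, h]
  · -- the surviving copy of the repeated letter `x` is acted on by the deleted one: `x_x = x^x`
    have hba : ¬ b < a := by simp [Fin.lt_def, hab]
    have hab' : a < b := by simp [Fin.lt_def, hab]
    simp only [facePlus, ha, hb, hba, hab', if_false, if_true, h, hBQ]

lemma isDegenerate_faceMinus (hab : (b : ℕ) = a + 1) (h : w a = w b) {i : Fin (n + 1)}
    (hia : i ≠ a) (hib : i ≠ b) : IsDegenerate (faceMinus w i) := by
  obtain ⟨p, q, hpq, hp, hq⟩ := Fin.exists_succAbove_eq_of_val_eq_succ hab hia hib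
  exact isDegenerate_of_val_eq_succ hpq (by simp only [faceMinus, hp, hq, h])

lemma isDegenerate_facePlus (up dn : X → X → X) (hab : (b : ℕ) = a + 1) (h : w a = w b)
    {i : Fin (n + 1)} (hia : i ≠ a) (hib : i ≠ b) : IsDegenerate (facePlus up dn w i) := by
  obtain ⟨p, q, hpq, hp, hq⟩ := Fin.exists_succAbove_eq_of_val_eq_succ hab hia hib
  have hside : a < i ↔ b < i := by
    rw [Fin.ne_iff_vne] at hib
    simp only [Fin.lt_def]
    omega
  exact isDegenerate_of_val_eq_succ hpq (by simp only [facePlus, hp, hq, hside, h])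

lemma birackBoundary_of_mem_degenSubgroup (up dn : X → X → X) (hBQ : ∀ x : X, up x x = dn x x)
    (hw : IsDegenerate w) : birackBoundary up dn n (FreeAbelianGroup.of w) ∈ degenSubgroup X n := by
  classical
  obtain ⟨a, hb, h⟩ := hw
  set b : Fin (n + 1) := ⟨a + 1, hb⟩
  have hab : (b : ℕ) = a + 1 := rfl
  set term : Fin (n + 1) → FreeAbelianGroup (Fin n → X) := fun i =>
    ((-1 : ℤ) ^ ((i : ℕ) + 1)) •
      (FreeAbelianGroup.of (faceMinus w i) - FreeAbelianGroup.of (facePlus up dn w i))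
  have hpair : term a + term b = 0 := by
    simp only [term, hab, faceMinus_eq_of_val_eq_succ hab h,
      facePlus_eq_of_val_eq_succ up dn hBQ hab h, pow_succ, ← add_smul]
    simp
  have hrest : ∀ i ∈ ({a, b} : Finset (Fin (n + 1)))ᶜ, term i ∈ degenSubgroup X n := by
    intro i hi
    simp only [Finset.mem_compl, Finset.mem_insert, Finset.mem_singleton, not_or] at hi
    exact zsmul_mem (sub_mem (of_mem_degenSubgroup (isDegenerate_faceMinus hab h hi.1 hi.2))
      (of_mem_degenSubgroup (isDegenerate_facePlus up dn hab h hi.1 hi.2))) _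
  have hne : a ≠ b := Fin.ne_of_val_ne (by omega)
  rw [birackBoundary, FreeAbelianGroup.lift_apply_of,
    ← Finset.sum_add_sum_compl {a, b} term, Finset.sum_pair hne, hpair, zero_add]
  exact sum_mem hrest

lemma degenSubgroup_le_comap_birackBoundary (up dn : X → X → X)
    (hBQ : ∀ x : X, up x x = dn x x) (n : ℕ) :
    degenSubgroup X (n + 1) ≤ (degenSubgroup X n).comap (birackBoundary up dn n) := by
  rw [degenSubgroup, AddSubgroup.closure_le]
  rintro _ ⟨w, hw, rfl⟩
  exact birackBoundary_of_mem_degenSubgroup up dn hBQ hw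

end

theorem degenerate_subcomplex_general {X : Type*} (up dn : X → X → X)
    (hBQ : ∀ a : X, up a a = dn a a) :
    ∀ n : ℕ, ∀ x ∈ degenSubgroup X (n + 1),
      birackBoundary up dn n x ∈ degenSubgroup X n :=
  fun n _ hx => degenSubgroup_le_comap_birackBoundary up dn hBQ n hx

/-- For a biquandle (a birack with `a^a = a_a`), the boundary map sends degenerate
chains to degenerate chains, so degenerate cubes form a subcomplex. -/
theorem degenerate_subcomplex {X : Type*} (up dn : X → X → X)
    (hYB1 : ∀ a b c : X, up (up a b) (dn c b) = up (up a c) (up b c))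
    (hYB2 : ∀ a b c : X, dn (dn c b) (up a b) = dn (dn c a) (dn b a))
    (hYB3 : ∀ a b c : X, up (dn b a) (dn c a) = dn (up b c) (up a c))
    (hBQ : ∀ a : X, up a a = dn a a) :
    ∀ n : ℕ, ∀ x ∈ degenSubgroup X (n + 1),
      birackBoundary up dn n x ∈ degenSubgroup X n :=
  degenerate_subcomplex_general up dn hBQ
end
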